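/- The u-operator of a quasi-triangular quasi-Hopf algebra is invariant under twisting: if F is a twistor and u_F = Σ S(Y^F_ν β_F S(Z^F_ν)) S(e^t_F) α_F e^F_t X^F_ν is the u-operator built from the twisted data (Δ_F, Φ_F, R_F = F^T R F⁻¹, α_F, β_F), then u_F = u. -/

import Mathlib

open TensorProduct

noncomputable section

namespace QH

variable (K A : Type*) [Field K] [Ring A] [Algebra K A]

/-- multiply the three legs of `A ⊗ (A ⊗ A)` together. -/
def mul3 : A ⊗[K] (A ⊗[K] A) →ₗ[K] A :=
  (LinearMap.mul' K A).comp
    (TensorProduct.map LinearMap.id (LinearMap.mul' K A))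

/-- flip of legs 2 and 3 of `A ⊗ (A ⊗ A)`. -/
def σ23 : A ⊗[K] (A ⊗[K] A) →ₐ[K] A ⊗[K] (A ⊗[K] A) :=
  Algebra.TensorProduct.map (AlgHom.id K A)
    (Algebra.TensorProduct.comm K A A).toAlgHom

/-- flip of legs 1 and 2 of `A ⊗ (A ⊗ A)`. -/
def σ12 : A ⊗[K] (A ⊗[K] A) →ₐ[K] A ⊗[K] (A ⊗[K] A) :=
  (Algebra.TensorProduct.assoc K K K A A A).toAlgHom.comp
    ((Algebra.TensorProduct.map
        (Algebra.TensorProduct.comm K A A).toAlgHom (AlgHom.id K A)).comp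
      (Algebra.TensorProduct.assoc K K K A A A).symm.toAlgHom)

/-- embedding of `A ⊗ A` into legs 1,2 of `A ⊗ (A ⊗ A)`. -/
def leg12 : A ⊗[K] A →ₐ[K] A ⊗[K] (A ⊗[K] A) :=
  Algebra.TensorProduct.map (AlgHom.id K A)
    (Algebra.TensorProduct.includeLeft : A →ₐ[K] A ⊗[K] A)

/-- embedding of `A ⊗ A` into legs 2,3 of `A ⊗ (A ⊗ A)`. -/
def leg23 : A ⊗[K] A →ₐ[K] A ⊗[K] (A ⊗[K] A) :=
  Algebra.TensorProduct.includeRight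

/-- embedding of `A ⊗ A` into legs 1,3 of `A ⊗ (A ⊗ A)`. -/
def leg13 : A ⊗[K] A →ₐ[K] A ⊗[K] (A ⊗[K] A) :=
  Algebra.TensorProduct.map (AlgHom.id K A)
    (Algebra.TensorProduct.includeRight : A →ₐ[K] A ⊗[K] A)

variable {K A} in
/-- `Δ ⊗ 1`, landing in `A ⊗ (A ⊗ A)`. -/
def Δ1 (Δ : A →ₐ[K] A ⊗[K] A) : A ⊗[K] A →ₐ[K] A ⊗[K] (A ⊗[K] A) :=
  (Algebra.TensorProduct.assoc K K K A A A).toAlgHom.comp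
    (Algebra.TensorProduct.map Δ (AlgHom.id K A))

variable {K A} in
/-- `1 ⊗ Δ`. -/
def oneΔ (Δ : A →ₐ[K] A ⊗[K] A) : A ⊗[K] A →ₐ[K] A ⊗[K] (A ⊗[K] A) :=
  Algebra.TensorProduct.map (AlgHom.id K A) Δ

variable {K A} in
/-- for `t = Σ tᵢ ⊗ tⁱ`, this is `Σ tᵢ * b * S tⁱ`. -/
def adE (S : A →ₗ[K] A) (b : A) (t : A ⊗[K] A) : A :=
  (LinearMap.mul' K A)
    ((TensorProduct.map LinearMap.id ((LinearMap.mulLeft K b).comp S)) t)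

variable {K A} in
/-- for `t = Σ tᵢ ⊗ tⁱ`, this is `Σ S(tᵢ) * b * tⁱ`. -/
def antiAdE (S : A →ₗ[K] A) (b : A) (t : A ⊗[K] A) : A :=
  (LinearMap.mul' K A)
    ((TensorProduct.map ((LinearMap.mulRight K b).comp S) LinearMap.id) t)

variable {K A} in
/-- the adjoint action `Ad a · b = Σ a₍₁₎ b S(a₍₂₎)`. -/
def ad (Δ : A →ₐ[K] A ⊗[K] A) (S : A →ₗ[K] A) (a b : A) : A :=
  adE S b (Δ a)

variable {K A} in
/-- the anti-adjoint action `Σ S(a₍₁₎) b a₍₂₎`. -/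
def antiAd (Δ : A →ₐ[K] A ⊗[K] A) (S : A →ₗ[K] A) (a b : A) : A :=
  antiAdE S b (Δ a)

variable {K A} in
/-- `C₁ = Σν X̄ν c S(Ȳν) α Z̄ν`, applied to `Φ⁻¹ = Σ X̄ν ⊗ Ȳν ⊗ Z̄ν`. -/
def C1inv (S : A →ₗ[K] A) (α c : A) (Φ' : A ⊗[K] (A ⊗[K] A)) : A :=
  mul3 K A ((TensorProduct.map LinearMap.id
    (TensorProduct.map
      ((LinearMap.mulLeft K c).comp ((LinearMap.mulRight K α).comp S))
      LinearMap.id)) Φ')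

variable {K A} in
/-- for `Φ = Σ Xν ⊗ Yν ⊗ Zν`, this is `Σν S(Xν) p Yν q S(Zν)`. -/
def sandwich (S : A →ₗ[K] A) (p q : A) (Φ : A ⊗[K] (A ⊗[K] A)) : A :=
  (LinearMap.mul' K A)
    ((TensorProduct.map ((LinearMap.mulRight K p).comp S)
      ((LinearMap.mul' K A).comp
        (TensorProduct.map LinearMap.id ((LinearMap.mulLeft K q).comp S)))) Φ)

variable {K A} in
/-- the twisted coassociator
`Φ_F = (F ⊗ 1)(Δ ⊗ 1)F · Φ · (1 ⊗ Δ)F⁻¹ (1 ⊗ F⁻¹)`. -/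
def twistΦ (Δ : A →ₐ[K] A ⊗[K] A) (Φ : A ⊗[K] (A ⊗[K] A))
    (F F' : A ⊗[K] A) : A ⊗[K] (A ⊗[K] A) :=
  leg12 K A F * Δ1 Δ F * Φ * oneΔ Δ F' * leg23 K A F'

variable {K A} in
/-- the `u`-operator `u = Σ S(Yν β S(Zν)) S(eⁱ) α eᵢ Xν`. -/
def uOp (S : A →ₗ[K] A) (α β : A) (Φ : A ⊗[K] (A ⊗[K] A)) (R : A ⊗[K] A) : A :=
  (LinearMap.mul' K A)
    ((TensorProduct.map
        ((LinearMap.mulRight K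
            ((LinearMap.mul' K A)
              ((TensorProduct.map ((LinearMap.mulRight K α).comp S) LinearMap.id)
                ((TensorProduct.comm K A A) R)))).comp S)
        LinearMap.id)
      ((TensorProduct.comm K A A)
        ((TensorProduct.map LinearMap.id
          ((LinearMap.mul' K A).comp
            (TensorProduct.map LinearMap.id ((LinearMap.mulLeft K β).comp S)))) Φ)))

variable {K A} in
/-- `u⁻¹ = Σ S⁻¹(Xν) S⁻¹(α ēⁱ) ēᵢ Yν β S(Zν)`. -/
def uInvOp (S S' : A →ₗ[K] A) (α β : A) (Φ : A ⊗[K] (A ⊗[K] A))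
    (R' : A ⊗[K] A) : A :=
  (LinearMap.mul' K A)
    ((TensorProduct.map
        ((LinearMap.mulRight K
            ((LinearMap.mul' K A)
              ((TensorProduct.map (S'.comp (LinearMap.mulLeft K α)) LinearMap.id)
                ((TensorProduct.comm K A A) R')))).comp S')
        ((LinearMap.mul' K A).comp
          (TensorProduct.map LinearMap.id ((LinearMap.mulLeft K β).comp S)))) Φ)

variable (W : Type*) [AddCommGroup W] [Module K W] [Module A W]
  [IsScalarTower K A W] [SMulCommClass K A W]

/-- the action `A ⊗[K] W →ₗ[K] W` of `A` on a module `W`. -/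
def actionMap : A ⊗[K] W →ₗ[K] W :=
  TensorProduct.lift
    (LinearMap.mk₂ K (fun a w => a • w)
      (fun a b w => add_smul a b w)
      (fun k a w => smul_assoc k a w)
      (fun a w₁ w₂ => smul_add a w₁ w₂)
      (fun k a w => (smul_comm a k w)))

variable {K A W} in
/-- `y ↦ y • v` as a `K`-linear map `A →ₗ[K] W`. -/
def actOn (v : W) : A →ₗ[K] W :=
  (LinearMap.toSpanSingleton A W v).restrictScalars K

end QH

/-- A quasi-Hopf algebra over a field `K`. -/
structure QuasiHopf (K A : Type*) [Field K] [Ring A] [Algebra K A] where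
  Δ : A →ₐ[K] A ⊗[K] A
  ε : A →ₐ[K] K
  Φ : A ⊗[K] (A ⊗[K] A)
  Φ' : A ⊗[K] (A ⊗[K] A)
  S : A →ₗ[K] A
  α : A
  β : A
  S_one : S 1 = 1
  S_mul : ∀ a b : A, S (a * b) = S b * S a
  Φ_inv : Φ * Φ' = 1
  Φ_inv' : Φ' * Φ = 1
  quasi_coassoc : ∀ a : A,
    Φ * (QH.oneΔ Δ) (Δ a) = (QH.Δ1 Δ) (Δ a) * Φ
  pentagon :
    (Algebra.TensorProduct.assoc K K K A A (A ⊗[K] A))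
        ((Algebra.TensorProduct.map Δ (AlgHom.id K (A ⊗[K] A))) Φ) *
      (Algebra.TensorProduct.map (AlgHom.id K A)
        (Algebra.TensorProduct.map (AlgHom.id K A) Δ)) Φ =
    (Algebra.TensorProduct.map (AlgHom.id K A)
        (Algebra.TensorProduct.map (AlgHom.id K A)
          (Algebra.TensorProduct.includeLeft : A →ₐ[K] A ⊗[K] A))) Φ *
      (Algebra.TensorProduct.map (AlgHom.id K A) (QH.Δ1 Δ)) Φ *
      (Algebra.TensorProduct.includeRight :
        (A ⊗[K] (A ⊗[K] A)) →ₐ[K] A ⊗[K] (A ⊗[K] (A ⊗[K] A))) Φ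
  counit_left : ∀ a : A,
    (Algebra.TensorProduct.lid K A)
      ((Algebra.TensorProduct.map ε (AlgHom.id K A)) (Δ a)) = a
  counit_right : ∀ a : A,
    (Algebra.TensorProduct.rid K K A)
      ((Algebra.TensorProduct.map (AlgHom.id K A) ε) (Δ a)) = a
  counit_Φ : (Algebra.TensorProduct.map (AlgHom.id K A)
      ((Algebra.TensorProduct.lid K A).toAlgHom.comp
        (Algebra.TensorProduct.map ε (AlgHom.id K A)))) Φ = 1
  antipode_α : ∀ a : A, QH.antiAdE S α (Δ a) = ε a • α
  antipode_β : ∀ a : A, QH.adE S β (Δ a) = ε a • β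
  hopf3 : QH.mul3 K A
      ((TensorProduct.map LinearMap.id
        (TensorProduct.map ((LinearMap.mulLeft K β).comp S)
          (LinearMap.mulLeft K α))) Φ') = 1
  hopf4 : QH.sandwich S α β Φ = 1

/-- A quasi-triangular quasi-Hopf algebra. -/
structure QuasiTriangular (K A : Type*) [Field K] [Ring A] [Algebra K A]
    extends QuasiHopf K A where
  R : A ⊗[K] A
  R' : A ⊗[K] A
  R_inv : R * R' = 1
  R_inv' : R' * R = 1
  intertwine : ∀ a : A,
    (Algebra.TensorProduct.comm K A A) (Δ a) * R = R * Δ a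
  hexagon1 : (QH.Δ1 Δ) R =
    QH.σ23 K A (QH.σ12 K A Φ') * QH.leg13 K A R * QH.σ23 K A Φ *
      QH.leg23 K A R * Φ'
  hexagon2 : (QH.oneΔ Δ) R =
    QH.σ12 K A (QH.σ23 K A Φ) * QH.leg13 K A R * QH.σ12 K A Φ' *
      QH.leg12 K A R * Φ

section UHelpers

variable {K A : Type*} [Field K] [Ring A] [Algebra K A]

@[simp] lemma adE_tmul (S : A →ₗ[K] A) (b x y : A) :
    QH.adE S b (x ⊗ₜ[K] y) = x * (b * S y) := by
  simp [QH.adE]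

@[simp] lemma antiAdE_tmul (S : A →ₗ[K] A) (b x y : A) :
    QH.antiAdE S b (x ⊗ₜ[K] y) = S x * b * y := by
  simp [QH.antiAdE]

lemma adE_add (S : A →ₗ[K] A) (b : A) (t s : A ⊗[K] A) :
    QH.adE S b (t + s) = QH.adE S b t + QH.adE S b s := by
  simp [QH.adE]

@[simp] lemma adE_zero (S : A →ₗ[K] A) (b : A) : QH.adE S b 0 = 0 := by
  simp [QH.adE]

lemma antiAdE_add (S : A →ₗ[K] A) (b : A) (t s : A ⊗[K] A) :
    QH.antiAdE S b (t + s) = QH.antiAdE S b t + QH.antiAdE S b s := by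
  simp [QH.antiAdE]

@[simp] lemma antiAdE_zero (S : A →ₗ[K] A) (b : A) : QH.antiAdE S b 0 = 0 := by
  simp [QH.antiAdE]

lemma adE_b_add (S : A →ₗ[K] A) (b b' : A) (t : A ⊗[K] A) :
    QH.adE S (b + b') t = QH.adE S b t + QH.adE S b' t := by
  induction t using TensorProduct.induction_on with
  | zero => simp
  | tmul x y => simp [add_mul, mul_add]
  | add t s ht hs => simp [adE_add, ht, hs]; abel

lemma antiAdE_b_add (S : A →ₗ[K] A) (b b' : A) (t : A ⊗[K] A) :
    QH.antiAdE S (b + b') t = QH.antiAdE S b t + QH.antiAdE S b' t := by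
  induction t using TensorProduct.induction_on with
  | zero => simp
  | tmul x y => simp [add_mul, mul_add]
  | add t s ht hs => simp [antiAdE_add, ht, hs]; abel

lemma adE_smul (S : A →ₗ[K] A) (k : K) (b : A) (t : A ⊗[K] A) :
    QH.adE S (k • b) t = k • QH.adE S b t := by
  induction t using TensorProduct.induction_on with
  | zero => simp
  | tmul x y => simp [mul_smul_comm, smul_mul_assoc]
  | add t s ht hs => simp [adE_add, ht, hs]

lemma antiAdE_smul (S : A →ₗ[K] A) (k : K) (b : A) (t : A ⊗[K] A) :
    QH.antiAdE S (k • b) t = k • QH.antiAdE S b t := by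
  induction t using TensorProduct.induction_on with
  | zero => simp
  | tmul x y => simp [mul_smul_comm, smul_mul_assoc]
  | add t s ht hs => simp [antiAdE_add, ht, hs]

lemma adE_one (S : A →ₗ[K] A) (hS1 : S 1 = 1) (b : A) :
    QH.adE S b (1 : A ⊗[K] A) = b := by
  rw [Algebra.TensorProduct.one_def]
  simp [hS1]

lemma antiAdE_one (S : A →ₗ[K] A) (hS1 : S 1 = 1) (b : A) :
    QH.antiAdE S b (1 : A ⊗[K] A) = b := by
  rw [Algebra.TensorProduct.one_def]
  simp [hS1]

lemma adE_mul (S : A →ₗ[K] A) (hS : ∀ a b : A, S (a * b) = S b * S a)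
    (b : A) (t s : A ⊗[K] A) :
    QH.adE S b (t * s) = QH.adE S (QH.adE S b s) t := by
  induction t using TensorProduct.induction_on with
  | zero => simp
  | tmul x y =>
    induction s using TensorProduct.induction_on with
    | zero => simp
    | tmul p q => simp [Algebra.TensorProduct.tmul_mul_tmul, hS, mul_assoc]
    | add s1 s2 h1 h2 =>
      simp [mul_add, adE_add, adE_b_add, h1, h2, add_mul]
  | add t1 t2 h1 h2 => simp [add_mul, adE_add, h1, h2]

lemma antiAdE_mul (S : A →ₗ[K] A) (hS : ∀ a b : A, S (a * b) = S b * S a)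
    (b : A) (t s : A ⊗[K] A) :
    QH.antiAdE S b (t * s) = QH.antiAdE S (QH.antiAdE S b t) s := by
  induction s using TensorProduct.induction_on with
  | zero => simp
  | tmul p q =>
    induction t using TensorProduct.induction_on with
    | zero => simp
    | tmul x y => simp [Algebra.TensorProduct.tmul_mul_tmul, hS, mul_assoc]
    | add t1 t2 h1 h2 =>
      simp [add_mul, antiAdE_add, antiAdE_b_add, h1, h2, mul_add]
  | add s1 s2 h1 h2 => simp [mul_add, antiAdE_add, h1, h2]

lemma comm_mul' (X Y : A ⊗[K] A) :
    (TensorProduct.comm K A A) (X * Y) =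
      (TensorProduct.comm K A A) X * (TensorProduct.comm K A A) Y := by
  induction X using TensorProduct.induction_on with
  | zero => simp
  | tmul x y =>
    induction Y using TensorProduct.induction_on with
    | zero => simp
    | tmul p q => simp [Algebra.TensorProduct.tmul_mul_tmul]
    | add Y1 Y2 h1 h2 => simp [mul_add, h1, h2]
  | add X1 X2 h1 h2 => simp [add_mul, h1, h2]

lemma comm_comm' (X : A ⊗[K] A) :
    (TensorProduct.comm K A A) ((TensorProduct.comm K A A) X) = X := by
  induction X using TensorProduct.induction_on with
  | zero => simp
  | tmul x y => simp
  | add X1 X2 h1 h2 => simp [h1, h2]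

lemma algComm_eq (X : A ⊗[K] A) :
    (Algebra.TensorProduct.comm K A A) X = (TensorProduct.comm K A A) X := by
  induction X using TensorProduct.induction_on with
  | zero => simp
  | tmul x y => simp
  | add X1 X2 h1 h2 => simp [h1, h2]

/-- the linear map underlying `uOp` with the `R`-part abstracted to `v`. -/
def eElL (S : A →ₗ[K] A) (β v : A) : A ⊗[K] (A ⊗[K] A) →ₗ[K] A :=
  (LinearMap.mul' K A).comp
    ((TensorProduct.map ((LinearMap.mulRight K v).comp S) LinearMap.id).comp
      (((TensorProduct.comm K A A).toLinearMap).comp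
        (TensorProduct.map LinearMap.id
          ((LinearMap.mul' K A).comp
            (TensorProduct.map LinearMap.id ((LinearMap.mulLeft K β).comp S))))))

lemma uOp_eq (S : A →ₗ[K] A) (α β : A) (Φ : A ⊗[K] (A ⊗[K] A)) (R : A ⊗[K] A) :
    QH.uOp S α β Φ R =
      eElL S β (QH.antiAdE S α ((TensorProduct.comm K A A) R)) Φ := rfl

lemma eElL_tmul2 (S : A →ₗ[K] A) (β v x : A) (T : A ⊗[K] A) :
    eElL S β v (x ⊗ₜ[K] T) = S (QH.adE S β T) * v * x := by
  simp [eElL, QH.adE]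

@[simp] lemma eElL_tmul (S : A →ₗ[K] A) (β v x y z : A) :
    eElL S β v (x ⊗ₜ[K] (y ⊗ₜ[K] z)) = S (y * (β * S z)) * v * x := by
  simp [eElL_tmul2]

lemma eElL_v_add (S : A →ₗ[K] A) (β v v' : A) (Ψ : A ⊗[K] (A ⊗[K] A)) :
    eElL S β (v + v') Ψ = eElL S β v Ψ + eElL S β v' Ψ := by
  induction Ψ using TensorProduct.induction_on with
  | zero => simp
  | tmul x T => simp [eElL_tmul2, mul_add, add_mul]
  | add P1 P2 h1 h2 => simp [map_add, h1, h2]; abel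

lemma L5 (S : A →ₗ[K] A) (hS : ∀ a b : A, S (a * b) = S b * S a)
    (β v : A) (Ψ : A ⊗[K] (A ⊗[K] A)) (t : A ⊗[K] A) :
    eElL S β v (Ψ * QH.leg23 K A t) = eElL S (QH.adE S β t) v Ψ := by
  induction Ψ using TensorProduct.induction_on with
  | zero => simp
  | tmul x T =>
    have : (x ⊗ₜ[K] T) * QH.leg23 K A t = (x * 1) ⊗ₜ[K] (T * t) := by
      simp [QH.leg23, Algebra.TensorProduct.tmul_mul_tmul]
    rw [this, eElL_tmul2, eElL_tmul2, adE_mul S hS, mul_one]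
  | add P1 P2 h1 h2 => simp [add_mul, map_add, h1, h2]

lemma L4 (S : A →ₗ[K] A) (Δ : A →ₐ[K] A ⊗[K] A) (ε : A →ₐ[K] K)
    (hS : ∀ a b : A, S (a * b) = S b * S a)
    (β : A) (hβ : ∀ a : A, QH.adE S β (Δ a) = ε a • β)
    (v : A) (Ψ : A ⊗[K] (A ⊗[K] A)) (t : A ⊗[K] A) :
    eElL S β v (Ψ * QH.oneΔ Δ t) =
      eElL S β v (Ψ *
        (((Algebra.TensorProduct.rid K K A)
            ((Algebra.TensorProduct.map (AlgHom.id K A) ε) t)) ⊗ₜ[K]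
          ((1 : A) ⊗ₜ[K] (1 : A)))) := by
  induction t using TensorProduct.induction_on with
  | zero => simp
  | tmul a c =>
    induction Ψ using TensorProduct.induction_on with
    | zero => simp
    | tmul x T =>
      have h1 : (x ⊗ₜ[K] T) * QH.oneΔ Δ (a ⊗ₜ[K] c)
          = (x * a) ⊗ₜ[K] (T * Δ c) := by
        simp [QH.oneΔ, Algebra.TensorProduct.tmul_mul_tmul]
      have h2 : (x ⊗ₜ[K] T) *
          (((Algebra.TensorProduct.rid K K A)
            ((Algebra.TensorProduct.map (AlgHom.id K A) ε) (a ⊗ₜ[K] c))) ⊗ₜ[K]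
            ((1 : A) ⊗ₜ[K] (1 : A)))
          = (ε c) • ((x * a) ⊗ₜ[K] T) := by
        rw [show ((1:A) ⊗ₜ[K] (1:A)) = (1 : A ⊗[K] A) from
          (Algebra.TensorProduct.one_def).symm]
        simp [Algebra.TensorProduct.tmul_mul_tmul, mul_smul_comm,
          TensorProduct.tmul_smul, TensorProduct.smul_tmul']
      rw [h1, h2, eElL_tmul2, adE_mul S hS, hβ, adE_smul, LinearMap.map_smul,
        map_smul, eElL_tmul2]
      simp [smul_mul_assoc]
    | add P1 P2 hp1 hp2 => simp only [add_mul, map_add, hp1, hp2]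
  | add t1 t2 h1 h2 =>
    simp only [map_add, TensorProduct.add_tmul, mul_add, h1, h2]

lemma L12core (S : A →ₗ[K] A) (hS : ∀ a b : A, S (a * b) = S b * S a)
    (β v s r p q x : A) (T' : A ⊗[K] A) :
    S (QH.adE S β ((q ⊗ₜ[K] (1:A)) * T')) * (S s * v * r) * (p * x)
      = S (QH.adE S β (((s * q) ⊗ₜ[K] (1:A)) * T')) * v * (r * p * x) := by
  induction T' using TensorProduct.induction_on with
  | zero => simp
  | tmul y z =>
    simp [Algebra.TensorProduct.tmul_mul_tmul, hS, mul_assoc]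
  | add T1 T2 h1 h2 =>
    simp only [mul_add, adE_add, map_add, add_mul, h1, h2]

lemma L12 (S : A →ₗ[K] A) (hS : ∀ a b : A, S (a * b) = S b * S a)
    (β v : A) (T t : A ⊗[K] A) (Ψ : A ⊗[K] (A ⊗[K] A)) :
    eElL S β (QH.antiAdE S v T) (QH.leg12 K A t * Ψ) =
      eElL S β v (QH.leg12 K A ((TensorProduct.comm K A A) T * t) * Ψ) := by
  induction T using TensorProduct.induction_on with
  | zero => simp [eElL, QH.adE]
  | tmul s r =>
    induction t using TensorProduct.induction_on with
    | zero => simp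
    | tmul p q =>
      induction Ψ using TensorProduct.induction_on with
      | zero => simp
      | tmul x T' =>
        have h1 : QH.leg12 K A (p ⊗ₜ[K] q) * (x ⊗ₜ[K] T')
            = (p * x) ⊗ₜ[K] ((q ⊗ₜ[K] (1:A)) * T') := by
          simp [QH.leg12, Algebra.TensorProduct.tmul_mul_tmul]
        have h2 : (TensorProduct.comm K A A) (s ⊗ₜ[K] r) * (p ⊗ₜ[K] q)
            = (r * p) ⊗ₜ[K] (s * q) := by
          simp [Algebra.TensorProduct.tmul_mul_tmul]
        have h3 : QH.leg12 K A ((r * p) ⊗ₜ[K] (s * q)) * (x ⊗ₜ[K] T')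
            = ((r * p) * x) ⊗ₜ[K] (((s * q) ⊗ₜ[K] (1:A)) * T') := by
          simp [QH.leg12, Algebra.TensorProduct.tmul_mul_tmul]
        rw [h1, h2, h3, eElL_tmul2, eElL_tmul2, antiAdE_tmul]
        exact L12core S hS β v s r p q x T'
      | add P1 P2 h1 h2 => simp only [mul_add, map_add, h1, h2]
    | add t1 t2 h1 h2 =>
      simp only [map_add, mul_add, add_mul, h1, h2]
  | add T1 T2 h1 h2 =>
    simp only [antiAdE_add, map_add, mul_add, add_mul, eElL_v_add, h1, h2]

lemma helperAssoc (S : A →ₗ[K] A) (hS : ∀ a b : A, S (a * b) = S b * S a)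
    (β v c x y z : A) (T : A ⊗[K] A) :
    eElL S β v
      ((Algebra.TensorProduct.assoc K K K A A A (T ⊗ₜ[K] c)) * (x ⊗ₜ[K] (y ⊗ₜ[K] z)))
      = S (y * (β * S (c * z))) *
          (QH.antiAdE S v ((TensorProduct.comm K A A) T)) * x := by
  induction T using TensorProduct.induction_on with
  | zero => simp
  | tmul p q =>
    simp [Algebra.TensorProduct.assoc_tmul, Algebra.TensorProduct.tmul_mul_tmul,
      hS, mul_assoc]
  | add T1 T2 h1 h2 =>
    simp only [TensorProduct.add_tmul, map_add, add_mul, antiAdE_add, mul_add,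
      h1, h2]

lemma Lfin (S : A →ₗ[K] A) (Δ : A →ₐ[K] A ⊗[K] A) (ε : A →ₐ[K] K)
    (hS : ∀ a b : A, S (a * b) = S b * S a)
    (β v : A)
    (hstar : ∀ a : A,
      QH.antiAdE S v ((TensorProduct.comm K A A) (Δ a)) = ε a • v)
    (t : A ⊗[K] A) (Ψ : A ⊗[K] (A ⊗[K] A)) :
    eElL S β v (QH.Δ1 Δ t * Ψ) =
      eElL S β v (((1 : A) ⊗ₜ[K] ((1 : A) ⊗ₜ[K]
        ((Algebra.TensorProduct.lid K A)
          ((Algebra.TensorProduct.map ε (AlgHom.id K A)) t)))) * Ψ) := by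
  induction t using TensorProduct.induction_on with
  | zero => simp
  | tmul a c =>
    induction Ψ using TensorProduct.induction_on with
    | zero => simp
    | tmul x T =>
      induction T using TensorProduct.induction_on with
      | zero => simp [TensorProduct.tmul_zero]
      | tmul y z =>
        have h1 : QH.Δ1 Δ (a ⊗ₜ[K] c) =
            Algebra.TensorProduct.assoc K K K A A A ((Δ a) ⊗ₜ[K] c) := by
          simp [QH.Δ1]
        have h2 : ((1 : A) ⊗ₜ[K] ((1 : A) ⊗ₜ[K]
            ((Algebra.TensorProduct.lid K A)
              ((Algebra.TensorProduct.map ε (AlgHom.id K A)) (a ⊗ₜ[K] c))))) *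
              (x ⊗ₜ[K] (y ⊗ₜ[K] z))
            = ε a • (x ⊗ₜ[K] (y ⊗ₜ[K] (c * z))) := by
          simp [Algebra.TensorProduct.tmul_mul_tmul, smul_mul_assoc,
            TensorProduct.tmul_smul]
        rw [h1, helperAssoc S hS, hstar, h2, map_smul]
        simp [smul_mul_assoc, mul_smul_comm]
      | add T1 T2 h1 h2 =>
        simp only [TensorProduct.tmul_add, mul_add, map_add, h1, h2]
    | add P1 P2 h1 h2 => simp only [mul_add, map_add, h1, h2]
  | add t1 t2 h1 h2 =>
    simp only [map_add, TensorProduct.add_tmul, TensorProduct.tmul_add,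
      add_mul, mul_add, h1, h2]

lemma one3 : ((1 : A) ⊗ₜ[K] ((1 : A) ⊗ₜ[K] (1 : A)))
    = (1 : A ⊗[K] (A ⊗[K] A)) := by
  rw [Algebra.TensorProduct.one_def, Algebra.TensorProduct.one_def]

end UHelpers
/-- The `u`-operator is invariant under twisting: `u_F = u`, where `u_F` is
built from the twisted data `(Φ_F, R_F = F^T R F⁻¹, α_F, β_F)`. -/
theorem statement18 {K A : Type*} [Field K] [Ring A] [Algebra K A] (Q : QuasiTriangular K A) (F F' : A ⊗[K] A)
    (hFF' : F * F' = 1) (hF'F : F' * F = 1)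
    (hεF : (Algebra.TensorProduct.lid K A)
      ((Algebra.TensorProduct.map Q.ε (AlgHom.id K A)) F) = 1)
    (hFε : (Algebra.TensorProduct.rid K K A)
      ((Algebra.TensorProduct.map (AlgHom.id K A) Q.ε) F) = 1) :
    QH.uOp Q.S (QH.antiAdE Q.S Q.α F') (QH.adE Q.S Q.β F)
        (QH.twistΦ Q.Δ Q.Φ F F')
        ((Algebra.TensorProduct.comm K A A) F * Q.R * F') =
      QH.uOp Q.S Q.α Q.β Q.Φ Q.R := by
  set S := Q.S
  set Δ := Q.Δ
  set ε := Q.ε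
  have hS : ∀ a b : A, S (a * b) = S b * S a := Q.S_mul
  have hS1 : S 1 = 1 := Q.S_one
  set w : A := QH.antiAdE S Q.α ((TensorProduct.comm K A A) Q.R) with hw
  -- counit of F' (second leg)
  have hFε' : (Algebra.TensorProduct.rid K K A)
      ((Algebra.TensorProduct.map (AlgHom.id K A) ε) F') = 1 := by
    set φ := ((Algebra.TensorProduct.rid K K A).toAlgHom.comp
      (Algebra.TensorProduct.map (AlgHom.id K A) ε)) with hφ
    have hφF : φ F = 1 := hFε
    have h2 : φ F * φ F' = 1 := by rw [← map_mul, hFF', map_one]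
    have : φ F' = 1 := by rwa [hφF, one_mul] at h2
    exact this
  -- the star identity for w
  have hstar : ∀ a : A,
      QH.antiAdE S w ((TensorProduct.comm K A A) (Δ a)) = ε a • w := by
    intro a
    rw [hw, ← antiAdE_mul S hS, ← comm_mul']
    have hi : Q.R * Δ a = (TensorProduct.comm K A A) (Δ a) * Q.R := by
      rw [← algComm_eq]; exact (Q.intertwine a).symm
    rw [hi, comm_mul', comm_comm', antiAdE_mul S hS, Q.antipode_α,
      antiAdE_smul]
  -- collapse of the twisted beta
  have hβF : QH.adE S (QH.adE S Q.β F) F' = Q.β := by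
    rw [← adE_mul S hS, hF'F, adE_one S hS1]
  -- collapse of the twisted w
  have hwF : QH.antiAdE S (QH.antiAdE S Q.α F')
      ((TensorProduct.comm K A A)
        ((Algebra.TensorProduct.comm K A A) F * Q.R * F')) =
      QH.antiAdE S w ((TensorProduct.comm K A A) F') := by
    rw [comm_mul', comm_mul', algComm_eq, comm_comm']
    rw [antiAdE_mul S hS _ (F * (TensorProduct.comm K A A) Q.R)
      ((TensorProduct.comm K A A) F')]
    rw [antiAdE_mul S hS _ F ((TensorProduct.comm K A A) Q.R)]
    have hα : QH.antiAdE S (QH.antiAdE S Q.α F') F = Q.α := by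
      rw [← antiAdE_mul S hS, hF'F, antiAdE_one S hS1]
    rw [hα]
  rw [uOp_eq, uOp_eq, hwF]
  show eElL S (QH.adE S Q.β F) (QH.antiAdE S w ((TensorProduct.comm K A A) F'))
      (QH.leg12 K A F * QH.Δ1 Δ F * Q.Φ * QH.oneΔ Δ F' * QH.leg23 K A F')
      = eElL S Q.β w Q.Φ
  rw [L5 S hS, hβF, L4 S Δ ε hS Q.β Q.antipode_β, hFε', one3,
    mul_one, mul_assoc, L12 S hS, comm_comm', hF'F, map_one, one_mul,
    Lfin S Δ ε hS Q.β w hstar, hεF, one3, one_mul]
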